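/- For α ∈ (0,1], ν ∈ (0,1], λ > 0, t > 0, and k ≥ 0, the k-th power series coefficient in u of E_ν(-λ^α t^ν (1-u)^α) equals ((-1)^k/k!) ∑_{r=0}^∞ ((-λ^α t^ν)^r / Γ(νr+1)) · Γ(αr+1)/Γ(αr+1-k). -/

import Mathlib

/-!
Substitute the binomial series `(1 - u)^(αr) = ∑ₖ binom(αr, k) (-u)^k` into the Mittag-Leffler
series and exchange the two summations. The exchange is legitimate because the double series
converges absolutely: `|binom(a, k)| ≤ (-1)^k binom(-|a|, k)`, and these majorants sum to
`(1 - |u|)^(-|a|)`, so the double series is dominated by the Mittag-Leffler series at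
`|λ^α t^ν| (1 - |u|)^(-α)`, which converges since `Γ(νr + 1)` eventually beats every geometric
sequence. The coefficient of `u^k` is then read off from `k! binom(a, k) = Γ(a + 1) / Γ(a + 1 - k)`.
-/

open Real Finset Filter

/-- The one-parameter Mittag-Leffler function. -/
noncomputable def mittagLeffler (ν x : ℝ) : ℝ := ∑' r : ℕ, x ^ r / Real.Gamma (ν * r + 1)

theorem Ring.choose_eq_prod_range_div {K : Type*} [Field K] [CharZero K] (a : K) (n : ℕ) :
    Ring.choose a n = (∏ j ∈ range n, (a - j)) / n.factorial := by
  rw [Ring.choose_eq_smul, ← descPochhammer_eval_eq_prod_range, ← Polynomial.aeval_eq_smeval]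
  simp [Polynomial.aeval_def, Polynomial.eval₂_eq_eval_map, descPochhammer_map, div_eq_inv_mul]

theorem abs_choose_le (a : ℝ) (n : ℕ) :
    |Ring.choose a n| ≤ (-1) ^ n * Ring.choose (-|a|) n := by
  have hprod : (-1 : ℝ) ^ n * ∏ j ∈ range n, (-|a| - j) = ∏ j ∈ range n, (|a| + j) := by
    rw [← card_range n, ← prod_const, card_range, ← prod_mul_distrib]
    exact prod_congr rfl fun j _ => by ring
  rw [Ring.choose_eq_prod_range_div, Ring.choose_eq_prod_range_div, abs_div, Nat.abs_cast,
    mul_div_assoc', hprod, abs_prod]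
  gcongr with j
  exact (abs_sub _ _).trans (by rw [Nat.abs_cast])

theorem hasSum_choose_mul_pow (a : ℝ) {y : ℝ} (hy : |y| < 1) :
    HasSum (fun n => Ring.choose a n * y ^ n) ((1 + y) ^ a) := by
  have := (one_add_rpow_hasFPowerSeriesOnBall_zero (a := a)).hasSum (y := y) ?_
  · simpa [binomialSeries, FormalMultilinearSeries.ofScalars] using this
  · simpa [edist_dist, Real.dist_eq] using hy

theorem hasSum_neg_one_pow_mul_choose_neg_mul_pow (b : ℝ) {x : ℝ} (hx : |x| < 1) :
    HasSum (fun n => (-1) ^ n * Ring.choose (-b) n * x ^ n) ((1 - x) ^ (-b)) := by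
  have := hasSum_choose_mul_pow (-b) (y := -x) (by rwa [abs_neg])
  simpa [← sub_eq_add_neg, neg_pow x, mul_left_comm, mul_assoc] using this

theorem tsum_mul_one_add_rpow_eq_tsum_tsum_choose (c a : ℕ → ℝ) {y : ℝ} (hy : |y| < 1)
    (hc : Summable fun r => |c r| * (1 - |y|) ^ (-|a r|)) :
    ∑' r, c r * (1 + y) ^ a r = ∑' k, (∑' r, c r * Ring.choose (a r) k) * y ^ k := by
  set f : ℕ → ℕ → ℝ := fun r k => c r * (Ring.choose (a r) k * y ^ k)
  set g : ℕ → ℕ → ℝ := fun r k => |c r| * ((-1) ^ k * Ring.choose (-|a r|) k * |y| ^ k)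
  have hfg : ∀ r k, ‖f r k‖ ≤ g r k := fun r k => by
    simp only [f, g, norm_mul, norm_pow, Real.norm_eq_abs]
    gcongr
    exact abs_choose_le _ _
  have hg : ∀ r, HasSum (g r) (|c r| * (1 - |y|) ^ (-|a r|)) := fun r =>
    (hasSum_neg_one_pow_mul_choose_neg_mul_pow _ (by rwa [abs_abs])).mul_left _
  have hf : Summable (Function.uncurry f) := by
    refine Summable.of_norm_bounded (g := Function.uncurry g) ?_ fun p => hfg p.1 p.2
    refine (summable_prod_of_nonneg fun p => (norm_nonneg _).trans (hfg p.1 p.2)).2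
      ⟨fun r => (hg r).summable, ?_⟩
    simpa only [fun r => (hg r).tsum_eq] using hc
  calc ∑' r, c r * (1 + y) ^ a r = ∑' r, ∑' k, f r k :=
        tsum_congr fun r => (((hasSum_choose_mul_pow _ hy).mul_left (c r)).tsum_eq).symm
    _ = ∑' k, ∑' r, f r k := hf.tsum_comm.symm
    _ = ∑' k, (∑' r, c r * Ring.choose (a r) k) * y ^ k :=
        tsum_congr fun k => by simp only [f, ← mul_assoc, tsum_mul_right]

theorem Real.Gamma_add_one_div_Gamma_add_one_sub_natCast {a : ℝ} (ha : Gamma (a + 1) ≠ 0)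
    (n : ℕ) : Gamma (a + 1) / Gamma (a + 1 - n) = ∏ j ∈ range n, (a - j) := by
  induction n with
  | zero => simp [ha]
  | succ n ih =>
    rw [prod_range_succ, ← ih, show a + 1 - (n + 1 : ℕ) = a - n by push_cast; ring]
    by_cases han : a - n = 0
    -- at the pole, Mathlib's junk value `Γ 0 = 0` matches the vanishing factor `a - n`
    · simp [han]
    · have hrec : Gamma (a - n) = Gamma (a + 1 - n) / (a - n) := by
        rw [eq_div_iff han, show a + 1 - (n : ℝ) = a - n + 1 by ring, Gamma_add_one han, mul_comm]
      rw [hrec, div_div_eq_mul_div, mul_div_right_comm]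

theorem eventually_pow_succ_le_factorial (E : ℝ) :
    ∀ᶠ m : ℕ in atTop, E ^ (m + 1) ≤ m.factorial := by
  filter_upwards [((FloorSemiring.tendsto_pow_div_factorial_atTop E).mul_const E).eventually
    (gt_mem_nhds (by norm_num : (0 : ℝ) * E < 1))] with m hm
  rw [div_mul_eq_mul_div, div_lt_one (by positivity), ← pow_succ] at hm
  exact hm.le

theorem eventually_pow_le_Gamma_mul_add_one {ν : ℝ} (hν : 0 < ν) {D : ℝ} (hD : 1 ≤ D) :
    ∀ᶠ r : ℕ in atTop, D ^ r ≤ Gamma (ν * r + 1) := by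
  set q := ⌈ν⁻¹⌉₊
  have hfloor : Tendsto (fun r : ℕ => ⌊ν * r⌋₊) atTop atTop :=
    tendsto_nat_floor_atTop.comp (tendsto_natCast_atTop_atTop.const_mul_atTop hν)
  filter_upwards [hfloor.eventually (eventually_pow_succ_le_factorial (D ^ q)),
    hfloor.eventually (eventually_ge_atTop 1)] with r hfac hn
  set n := ⌊ν * r⌋₊
  have hνr : 0 ≤ ν * r := by positivity
  have hr : r ≤ q * (n + 1) := by
    have : (r : ℝ) ≤ q * (n + 1) := calc
      (r : ℝ) = ν⁻¹ * (ν * r) := by field_simp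
      _ ≤ q * (n + 1) := mul_le_mul (Nat.le_ceil _) (Nat.lt_floor_add_one _).le hνr
        (Nat.cast_nonneg _)
    exact_mod_cast this
  calc D ^ r ≤ (D ^ q) ^ (n + 1) := by rw [← pow_mul]; exact pow_le_pow_right₀ hD hr
    _ ≤ n.factorial := hfac
    _ = Gamma (n + 1) := (Gamma_nat_eq_factorial n).symm
    _ ≤ Gamma (ν * r + 1) := Gamma_strictMonoOn_Ici.monotoneOn
        (by simp only [Set.mem_Ici]; exact_mod_cast Nat.succ_le_succ hn)
        (by simp only [Set.mem_Ici]; linarith [Nat.floor_le hνr, (Nat.one_le_cast (α := ℝ)).2 hn])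
        (by linarith [Nat.floor_le hνr])

theorem summable_pow_div_Gamma_mul_add_one {ν : ℝ} (hν : 0 < ν) (C : ℝ) :
    Summable fun r : ℕ => C ^ r / Gamma (ν * r + 1) := by
  set D := |C| + 1
  have hD : 0 < D := by positivity
  refine Summable.of_norm_bounded_eventually_nat
    (summable_geometric_of_lt_one (by positivity) ((div_lt_one hD).2 (lt_add_one _))) ?_
  filter_upwards [eventually_pow_le_Gamma_mul_add_one hν (le_add_of_nonneg_left (abs_nonneg C))]
    with r hr
  rw [norm_div, norm_pow, Real.norm_eq_abs, Real.norm_of_nonneg (by linarith [pow_pos hD r]),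
    div_pow]
  gcongr

theorem space_time_fractional_poisson_coefficients_general (l α ν t : ℝ)
    (hα : α ∈ Set.Ioc (0:ℝ) 1) (hν : ν ∈ Set.Ioc (0:ℝ) 1)
    (u : ℝ) (hu : |u| < 1) :
    mittagLeffler ν (-l ^ α * t ^ ν * (1 - u) ^ α) =
      ∑' k : ℕ, ((-1 : ℝ) ^ k / (k.factorial : ℝ) *
        ∑' r : ℕ, (-l ^ α * t ^ ν) ^ r / Real.Gamma (ν * r + 1) *
          (Real.Gamma (α * r + 1) / Real.Gamma (α * r + 1 - k))) * u ^ k := by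
  set A := -l ^ α * t ^ ν
  have hu' : 0 < 1 - |u| := sub_pos.2 hu
  have hαr (r : ℕ) : 0 ≤ α * r := mul_nonneg hα.1.le r.cast_nonneg
  have hseries : mittagLeffler ν (A * (1 - u) ^ α) =
      ∑' r : ℕ, A ^ r / Gamma (ν * r + 1) * (1 + -u) ^ (α * r) := by
    refine tsum_congr fun r => ?_
    rw [← sub_eq_add_neg, mul_pow, ← rpow_natCast ((1 - u) ^ α),
      ← rpow_mul (by linarith [le_abs_self u])]
    ring
  have hmajorant : Summable fun r : ℕ =>
      |A ^ r / Gamma (ν * r + 1)| * (1 - |-u|) ^ (-|α * r|) := by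
    refine (summable_pow_div_Gamma_mul_add_one hν.1 (|A| * (1 - |u|) ^ (-α))).congr fun r => ?_
    rw [abs_neg, abs_of_nonneg (hαr r), abs_div, abs_pow,
      abs_of_pos (Gamma_pos_of_pos (by have := hν.1; positivity)), mul_pow,
      ← rpow_natCast ((1 - |u|) ^ (-α)), ← rpow_mul hu'.le, neg_mul]
    ring
  rw [hseries, tsum_mul_one_add_rpow_eq_tsum_tsum_choose _ _ (by rwa [abs_neg]) hmajorant]
  refine tsum_congr fun k => ?_
  have hcoeff (r : ℕ) : A ^ r / Gamma (ν * r + 1) * Ring.choose (α * r) k =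
      A ^ r / Gamma (ν * r + 1) * (Gamma (α * r + 1) / Gamma (α * r + 1 - k)) / k.factorial := by
    rw [Ring.choose_eq_prod_range_div, Real.Gamma_add_one_div_Gamma_add_one_sub_natCast
      (Gamma_pos_of_pos (by linarith [hαr r])).ne', mul_div_assoc]
  simp only [hcoeff, tsum_div_const, neg_pow u]
  ring

theorem space_time_fractional_poisson_coefficients (l α ν t : ℝ) (hl : 0 < l)
    (hα : α ∈ Set.Ioc (0:ℝ) 1) (hν : ν ∈ Set.Ioc (0:ℝ) 1) (ht : 0 < t)
    (u : ℝ) (hu : |u| < 1) :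
    mittagLeffler ν (-l ^ α * t ^ ν * (1 - u) ^ α) =
      ∑' k : ℕ, ((-1 : ℝ) ^ k / (k.factorial : ℝ) *
        ∑' r : ℕ, (-l ^ α * t ^ ν) ^ r / Real.Gamma (ν * r + 1) *
          (Real.Gamma (α * r + 1) / Real.Gamma (α * r + 1 - k))) * u ^ k :=
  space_time_fractional_poisson_coefficients_general l α ν t hα hν u hu
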